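/- arXiv:2208.09101 — 4 statements merged into one kernel-verified Lean document; each statement's English description precedes it below -/
import Mathlib

section
/- Let U_1, …, U_k, U_{k+1} be Pauli operators on N qubits such that {U_1, …, U_k, U_{k+1}} is an independent set of stabilizers. Then for every choice of signs λ_1, …, λ_k ∈ {1, −1}, the trace of the matrix U_{k+1} · ∏_{i=1}^{k} (1 + λ_i U_i)/2 equals 0. -/
/-!
Expanding the product of the factors `(1 + λᵢ Uᵢ)/2` writes the trace as a linear combination
of traces of `U_{k+1} ∏_{i ∈ T} Uᵢ` over subsets `T`. Each of these products is a scalar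
multiple of a tensor product of single-qubit Pauli matrices, and by independence it is not a
scalar multiple of the identity. Hence some tensor factor is one of `σx, σy, σz`, which are
traceless, and the trace of a tensor product is the product of the traces.
-/

noncomputable section

/-- The space of operators (matrices) on the `N`-qubit Hilbert space. -/
abbrev QMat (N : ℕ) := Matrix (Fin N → Fin 2) (Fin N → Fin 2) ℂ

def pauliSx : Matrix (Fin 2) (Fin 2) ℂ := !![0, 1; 1, 0]
def pauliSy : Matrix (Fin 2) (Fin 2) ℂ := !![0, -Complex.I; Complex.I, 0]
def pauliSz : Matrix (Fin 2) (Fin 2) ℂ := !![1, 0; 0, -1]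

/-- A Pauli operator on `N` qubits: a ±1-signed tensor product of single-qubit
Pauli matrices `1, σx, σy, σz`. -/
def IsPauli {N : ℕ} (M : QMat N) : Prop :=
  ∃ (ε : ℂ) (P : Fin N → Matrix (Fin 2) (Fin 2) ℂ),
    (ε = 1 ∨ ε = -1) ∧
    (∀ j, P j = 1 ∨ P j = pauliSx ∨ P j = pauliSy ∨ P j = pauliSz) ∧
    ∀ s t, M s t = ε * ∏ j, P j (s j) (t j)

/-- A set of stabilizers: pairwise commuting Pauli operators whose generated
multiplicative group (equivalently, monoid, since each element is an involution)
does not contain `-1`. -/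
def IsStabilizerSet {N : ℕ} (S : Set (QMat N)) : Prop :=
  (∀ M ∈ S, IsPauli M) ∧
  (∀ M ∈ S, ∀ M' ∈ S, M * M' = M' * M) ∧
  (-1 : QMat N) ∉ Submonoid.closure S

/-- An independent set of stabilizers: the product of every nonempty finite subset
(encoded as a nodup list of elements of `S`) is not a complex scalar multiple of
the identity matrix. -/
def IsIndependentSet {N : ℕ} (S : Set (QMat N)) : Prop :=
  IsStabilizerSet S ∧
  ∀ L : List (QMat N), L ≠ [] → L.Nodup → (∀ A ∈ L, A ∈ S) →
    ∀ c : ℂ, L.prod ≠ c • (1 : QMat N)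

namespace Matrix

section PiKronecker

variable {ι m n o R : Type*} [Fintype ι] [CommSemiring R]

def piKronecker (P : ι → Matrix m n R) : Matrix (ι → m) (ι → n) R :=
  of fun s t => ∏ i, P i (s i) (t i)

@[simp]
theorem piKronecker_apply (P : ι → Matrix m n R) (s : ι → m) (t : ι → n) :
    piKronecker P s t = ∏ i, P i (s i) (t i) :=
  rfl

theorem piKronecker_mul [DecidableEq ι] [Fintype n] (P : ι → Matrix m n R)
    (Q : ι → Matrix n o R) :
    piKronecker P * piKronecker Q = piKronecker fun i => P i * Q i := by
  ext s t
  simp only [mul_apply, piKronecker_apply, ← Finset.prod_mul_distrib]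
  exact (Fintype.prod_sum fun i x => P i (s i) x * Q i x (t i)).symm

theorem piKronecker_one [DecidableEq ι] [DecidableEq m] :
    piKronecker (fun _ : ι => (1 : Matrix m m R)) = 1 := by
  ext s t
  by_cases hst : s = t
  · subst hst
    simp
  · obtain ⟨i, hi⟩ := Function.ne_iff.mp hst
    have hi' : (1 : Matrix m m R) (s i) (t i) = 0 := one_apply_ne hi
    rw [one_apply_ne hst, piKronecker_apply, Finset.prod_eq_zero (Finset.mem_univ i) hi']

theorem piKronecker_smul (d : ι → R) (P : ι → Matrix m n R) :
    piKronecker (fun i => d i • P i) = (∏ i, d i) • piKronecker P := by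
  ext s t
  simp [Finset.prod_mul_distrib]

theorem trace_piKronecker [DecidableEq ι] [Fintype m] (P : ι → Matrix m m R) :
    trace (piKronecker P) = ∏ i, trace (P i) :=
  (Fintype.prod_sum fun i x => P i x x).symm

end PiKronecker

theorem trace_mul_list_prod_eq_zero {ι n R : Type*} [Fintype n] [DecidableEq n]
    [CommSemiring R]
    (A : ι → Matrix n n R) (c d : ι → R) (l : List ι) (X : Matrix n n R)
    (h : ∀ l' : List ι, l'.Sublist l → trace (X * (l'.map A).prod) = 0) :
    trace (X * (l.map fun i => c i • 1 + d i • A i).prod) = 0 := by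
  induction l generalizing X with
  | nil => simpa using h [] List.Sublist.slnil
  | cons i l ih =>
    have h₁ := ih X fun l' hl' => h l' (hl'.cons i)
    have h₂ := ih (X * A i) fun l' hl' => by
      simpa [mul_assoc] using h (i :: l') (hl'.cons_cons i)
    rw [List.map_cons, List.prod_cons, add_mul, mul_add, smul_mul_assoc, smul_mul_assoc,
      one_mul, mul_smul_comm, mul_smul_comm, ← mul_assoc, trace_add, trace_smul, trace_smul,
      h₁, h₂, smul_zero, smul_zero, add_zero]

end Matrix

def IsPauliMatrix (P : Matrix (Fin 2) (Fin 2) ℂ) : Prop :=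
  P = 1 ∨ P = pauliSx ∨ P = pauliSy ∨ P = pauliSz

section PauliMatrices

open Complex

theorem pauliSx_mul_pauliSx : pauliSx * pauliSx = 1 := by
  ext a b; fin_cases a <;> fin_cases b <;> simp [pauliSx]

theorem pauliSy_mul_pauliSy : pauliSy * pauliSy = 1 := by
  ext a b; fin_cases a <;> fin_cases b <;> simp [pauliSy]

theorem pauliSz_mul_pauliSz : pauliSz * pauliSz = 1 := by
  ext a b; fin_cases a <;> fin_cases b <;> simp [pauliSz]

theorem pauliSx_mul_pauliSy : pauliSx * pauliSy = I • pauliSz := by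
  ext a b; fin_cases a <;> fin_cases b <;> simp [pauliSx, pauliSy, pauliSz]

theorem pauliSy_mul_pauliSx : pauliSy * pauliSx = -I • pauliSz := by
  ext a b; fin_cases a <;> fin_cases b <;> simp [pauliSx, pauliSy, pauliSz]

theorem pauliSy_mul_pauliSz : pauliSy * pauliSz = I • pauliSx := by
  ext a b; fin_cases a <;> fin_cases b <;> simp [pauliSx, pauliSy, pauliSz]

theorem pauliSz_mul_pauliSy : pauliSz * pauliSy = -I • pauliSx := by
  ext a b; fin_cases a <;> fin_cases b <;> simp [pauliSx, pauliSy, pauliSz]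

theorem pauliSz_mul_pauliSx : pauliSz * pauliSx = I • pauliSy := by
  ext a b; fin_cases a <;> fin_cases b <;> simp [pauliSx, pauliSy, pauliSz]

theorem pauliSx_mul_pauliSz : pauliSx * pauliSz = -I • pauliSy := by
  ext a b; fin_cases a <;> fin_cases b <;> simp [pauliSx, pauliSy, pauliSz]

end PauliMatrices

theorem IsPauliMatrix.mul {P Q : Matrix (Fin 2) (Fin 2) ℂ} (hP : IsPauliMatrix P)
    (hQ : IsPauliMatrix Q) : ∃ (d : ℂ) (R : Matrix (Fin 2) (Fin 2) ℂ),
      IsPauliMatrix R ∧ P * Q = d • R := by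
  rcases hP with rfl | rfl | rfl | rfl <;> rcases hQ with rfl | rfl | rfl | rfl <;>
    simp only [one_mul, mul_one, pauliSx_mul_pauliSx, pauliSy_mul_pauliSy,
      pauliSz_mul_pauliSz, pauliSx_mul_pauliSy, pauliSy_mul_pauliSx, pauliSy_mul_pauliSz,
      pauliSz_mul_pauliSy, pauliSz_mul_pauliSx, pauliSx_mul_pauliSz] <;>
    first
    | exact ⟨_, _, by simp [IsPauliMatrix], rfl⟩
    | exact ⟨1, _, by simp [IsPauliMatrix], (one_smul ℂ _).symm⟩

theorem IsPauliMatrix.trace_eq_zero {P : Matrix (Fin 2) (Fin 2) ℂ} (hP : IsPauliMatrix P)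
    (h1 : P ≠ 1) : P.trace = 0 := by
  rcases hP with rfl | rfl | rfl | rfl
  · exact absurd rfl h1
  all_goals simp [Matrix.trace_fin_two, pauliSx, pauliSy, pauliSz]

def IsScaledPauliString {N : ℕ} (M : QMat N) : Prop :=
  ∃ (c : ℂ) (P : Fin N → Matrix (Fin 2) (Fin 2) ℂ),
    (∀ j, IsPauliMatrix (P j)) ∧ M = c • Matrix.piKronecker P

section ScaledPauliString

variable {N : ℕ} {M M' : QMat N}

theorem IsPauli.isScaledPauliString (h : IsPauli M) : IsScaledPauliString M := by
  obtain ⟨ε, P, -, hP, hM⟩ := h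
  exact ⟨ε, P, hP, by ext s t; simp [hM]⟩

theorem isScaledPauliString_one : IsScaledPauliString (1 : QMat N) :=
  ⟨1, fun _ => 1, fun _ => Or.inl rfl, by rw [Matrix.piKronecker_one, one_smul]⟩

theorem IsScaledPauliString.mul (h : IsScaledPauliString M) (h' : IsScaledPauliString M') :
    IsScaledPauliString (M * M') := by
  obtain ⟨c, P, hP, rfl⟩ := h
  obtain ⟨c', Q, hQ, rfl⟩ := h'
  choose d R hR hPQ using fun j => (hP j).mul (hQ j)
  refine ⟨c * c' * ∏ j, d j, R, hR, ?_⟩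
  rw [smul_mul_smul_comm, Matrix.piKronecker_mul, funext hPQ, Matrix.piKronecker_smul,
    smul_smul]

theorem isScaledPauliString_list_prod {L : List (QMat N)}
    (h : ∀ A ∈ L, IsScaledPauliString A) : IsScaledPauliString L.prod :=
  List.prod_induction _ (fun _ _ => IsScaledPauliString.mul) isScaledPauliString_one h

theorem IsScaledPauliString.eq_smul_one_or_trace_eq_zero (h : IsScaledPauliString M) :
    (∃ c : ℂ, M = c • 1) ∨ M.trace = 0 := by
  obtain ⟨c, P, hP, rfl⟩ := h
  by_cases hone : ∀ j, P j = 1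
  · exact .inl ⟨c, by rw [funext hone, Matrix.piKronecker_one]⟩
  · obtain ⟨j, hj⟩ := not_forall.mp hone
    right
    rw [Matrix.trace_smul, Matrix.trace_piKronecker,
      Finset.prod_eq_zero (Finset.mem_univ j) ((hP j).trace_eq_zero hj), smul_zero]

end ScaledPauliString

theorem IsIndependentSet.trace_list_prod_eq_zero {N : ℕ} {S : Set (QMat N)}
    (hS : IsIndependentSet S) {L : List (QMat N)} (hne : L ≠ []) (hnd : L.Nodup)
    (hmem : ∀ A ∈ L, A ∈ S) : L.prod.trace = 0 :=
  (isScaledPauliString_list_prod fun A hA =>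
      (hS.1.1 A (hmem A hA)).isScaledPauliString).eq_smul_one_or_trace_eq_zero.resolve_left
    fun ⟨c, hc⟩ => hS.2 L hne hnd hmem c hc

theorem statement0_general (N k : ℕ)
    (U : Fin (k + 1) → QMat N)
    (hinj : Function.Injective U)
    (hind : IsIndependentSet (Set.range U))
    (lam : Fin k → ℂ) :
    Matrix.trace
      (U (Fin.last k) *
        ((List.finRange k).map
          (fun i => (2⁻¹ : ℂ) • (1 + lam i • U i.castSucc))).prod) = 0 := by
  simp_rw [smul_add, smul_smul]
  refine Matrix.trace_mul_list_prod_eq_zero _ _ _ _ _ fun l hl => ?_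
  rw [← List.prod_cons]
  refine hind.trace_list_prod_eq_zero (List.cons_ne_nil _ _) ?_ (by simp)
  refine List.nodup_cons.mpr ⟨?_, ?_⟩
  · simpa using fun i _ h => (Fin.castSucc_lt_last i).ne (hinj h)
  · exact (hl.nodup (List.nodup_finRange k)).map (hinj.comp (Fin.castSucc_injective k))

/-- If `U 1, …, U k, U (k+1)` form an independent set of stabilizers, then
for all signs `λ i ∈ {1,-1}`, `tr (U (k+1) * ∏ i (1 + λ i * U i)/2) = 0`. -/
theorem statement0 (N k : ℕ) (hN : 0 < N)
    (U : Fin (k + 1) → QMat N)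
    (hinj : Function.Injective U)
    (hind : IsIndependentSet (Set.range U))
    (lam : Fin k → ℂ) (hlam : ∀ i, lam i = 1 ∨ lam i = -1) :
    Matrix.trace
      (U (Fin.last k) *
        ((List.finRange k).map
          (fun i => (2⁻¹ : ℂ) • (1 + lam i • U i.castSucc))).prod) = 0 :=
  statement0_general N k U hinj hind lam
end
end

section
/- Every independent set of stabilizers on N qubits is contained in a complete independent set of stabilizers on N qubits, i.e., one with exactly N elements. -/
noncomputable section

/-- A complete independent set of stabilizers: an independent set with exactly `N` elements. -/
def IsCompleteSet {N : ℕ} (S : Set (QMat N)) : Prop :=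
  IsIndependentSet S ∧ S.ncard = N

/-!
Write a Pauli operator as `± pauliOp v` with `v : Fin N → ZMod 2 × ZMod 2`. Multiplying Pauli
operators adds their vectors (up to a phase), two of them commute iff their vectors are orthogonal
for the symplectic form `∑ⱼ (xⱼ z'ⱼ + zⱼ x'ⱼ)`, and a set of stabilizers is independent iff its
vectors are linearly independent over `ZMod 2`. An independent set `S` thus spans an isotropic
subspace `W` of dimension `|S|` of a `2N`-dimensional space with a nondegenerate form. If `|S| < N`,
then `W` is strictly smaller than `Wᗮ`, which has dimension `2N - |S|`, and for any `u ∈ Wᗮ \ W`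
the operator `pauliOp u` can be added to `S`. Repeat until `|S| = N`.
-/

lemma Submonoid.exists_nodup_list_of_mem_closure {M : Type*} [Monoid M] {s : Set M}
    (hsq : ∀ a ∈ s, a * a = 1) (hcomm : ∀ a ∈ s, ∀ b ∈ s, Commute a b) {x : M}
    (hx : x ∈ Submonoid.closure s) : ∃ L : List M, L.Nodup ∧ (∀ a ∈ L, a ∈ s) ∧ L.prod = x := by
  classical
  obtain ⟨L, hLs, rfl⟩ := Submonoid.exists_list_of_mem_closure hx
  clear hx
  induction L with
  | nil => exact ⟨[], List.nodup_nil, by simp, rfl⟩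
  | cons a L ih =>
    obtain ⟨L', hnd, hL's, hprod⟩ := ih fun b hb => hLs b (List.mem_cons_of_mem _ hb)
    have ha := hLs a List.mem_cons_self
    by_cases haL' : a ∈ L'
    · refine ⟨L'.erase a, hnd.erase a, fun b hb => hL's b (List.mem_of_mem_erase hb), ?_⟩
      have hpair : L'.Pairwise Commute :=
        List.pairwise_of_forall_mem_list fun b hb c hc => hcomm b (hL's b hb) c (hL's c hc)
      rw [List.prod_cons, ← hprod, (List.perm_cons_erase haL').prod_eq' hpair, List.prod_cons,
        ← mul_assoc, hsq a ha, one_mul]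
    · refine ⟨a :: L', hnd.cons haL', ?_, by rw [List.prod_cons, List.prod_cons, hprod]⟩
      exact List.forall_mem_cons.2 ⟨ha, hL's⟩

lemma linearIndepOn_zmod_two_iff {ι V : Type*} [AddCommGroup V] [Module (ZMod 2) V] {f : ι → V}
    {s : Set ι} :
    LinearIndepOn (ZMod 2) f s ↔ ∀ t : Finset ι, ↑t ⊆ s → t.Nonempty → ∑ i ∈ t, f i ≠ 0 := by
  classical
  rw [linearIndepOn_iff']
  constructor
  · rintro h t hts ⟨i, hi⟩ hsum
    exact one_ne_zero (h t (fun _ => 1) hts (by simpa using hsum) i hi)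
  · intro h t g hts hsum i hi
    by_contra hgi
    refine h (t.filter (g · ≠ 0)) (fun j hj => hts (Finset.mem_filter.1 hj).1)
      ⟨i, Finset.mem_filter.2 ⟨hi, hgi⟩⟩ ?_
    calc ∑ j ∈ t.filter (g · ≠ 0), f j = ∑ j ∈ t.filter (g · ≠ 0), g j • f j :=
          Finset.sum_congr rfl fun j hj => by
            rw [show g j = 1 from Fin.eq_one_of_ne_zero _ (Finset.mem_filter.1 hj).2, one_smul]
      _ = ∑ j ∈ t, g j • f j := Finset.sum_filter_of_ne fun j _ hj hg => hj (by rw [hg, zero_smul])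
      _ = 0 := hsum

lemma finrank_span_image_eq_ncard {K V ι : Type*} [DivisionRing K] [AddCommGroup V] [Module K V]
    {f : ι → V} {s : Set ι} (hli : LinearIndepOn K f s) (hs : s.Finite) :
    Module.finrank K (Submodule.span K (f '' s)) = s.ncard := by
  have := (hs.image f).fintype
  rw [finrank_span_set_eq_card hli.id_image, ← Set.ncard_eq_toFinset_card', hli.injOn.ncard_image]

lemma neg_one_pow_val_sum {ι R : Type*} [CommRing R] (s : Finset ι)
    (x : ι → ZMod 2) : (-1 : R) ^ (∑ i ∈ s, x i).val = ∏ i ∈ s, (-1 : R) ^ (x i).val := by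
  induction s using Finset.cons_induction with
  | empty => simp
  | cons a s ha ih =>
    rw [Finset.sum_cons, Finset.prod_cons, ← ih, ZMod.val_add, ← neg_one_pow_eq_pow_mod_two,
      pow_add]

namespace LinearMap.BilinForm

open Module Submodule

lemma span_le_orthogonal_span {R M : Type*} [CommSemiring R] [AddCommMonoid M] [Module R M]
    {B : LinearMap.BilinForm R M} {G : Set M} (hG : ∀ x ∈ G, ∀ y ∈ G, B x y = 0) :
    span R G ≤ B.orthogonal (span R G) := by
  have hGW : G ⊆ B.orthogonal (span R G) := fun y hy x hx => by
    induction hx using Submodule.span_induction with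
    | mem x hx => exact hG x hx y hy
    | zero => simp
    | add x x' _ _ h h' => simp [h, h']
    | smul c x _ h => simp [h]
  exact span_le.2 hGW

variable {K V : Type*} [Field K] [AddCommGroup V] [Module K V] [FiniteDimensional K V]
  {B : LinearMap.BilinForm K V} {W : Submodule K V}

lemma Nondegenerate.two_mul_finrank_le_of_le_orthogonal (hB : B.Nondegenerate)
    (hW : W ≤ B.orthogonal W) :
    2 * finrank K W ≤ finrank K V := by
  have := Submodule.finrank_mono hW
  have := W.finrank_le
  rw [finrank_orthogonal hB] at *
  omega

lemma Nondegenerate.exists_mem_orthogonal_notMem (hB : B.Nondegenerate)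
    (hlt : 2 * finrank K W < finrank K V) :
    ∃ u ∈ B.orthogonal W, u ∉ W := by
  by_contra! h
  have := Submodule.finrank_mono (show B.orthogonal W ≤ W from h)
  rw [finrank_orthogonal hB] at this
  have := W.finrank_le
  omega

end LinearMap.BilinForm

namespace Stabilizer

open Matrix Module Submodule

section Kronecker

variable {ι κ R : Type*} [Fintype ι] [CommSemiring R]

def kronPi (Q : ι → Matrix κ κ R) : Matrix (ι → κ) (ι → κ) R :=
  Matrix.of fun s t => ∏ j, Q j (s j) (t j)

lemma kronPi_apply (Q : ι → Matrix κ κ R) (s t : ι → κ) :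
    kronPi Q s t = ∏ j, Q j (s j) (t j) := rfl

lemma kronPi_smul (c : ι → R) (Q : ι → Matrix κ κ R) :
    kronPi (c • Q) = (∏ j, c j) • kronPi Q := by
  ext s t
  simp only [kronPi_apply, Pi.smul_apply', Matrix.smul_apply, smul_eq_mul, Finset.prod_mul_distrib]

lemma kronPi_one [DecidableEq ι] [DecidableEq κ] : kronPi (1 : ι → Matrix κ κ R) = 1 := by
  ext s t
  simp only [kronPi_apply, Pi.one_apply, one_apply, Finset.prod_boole, Finset.mem_univ,
    true_implies, funext_iff]

variable [DecidableEq ι] [Fintype κ]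

lemma kronPi_mul (Q Q' : ι → Matrix κ κ R) : kronPi Q * kronPi Q' = kronPi (Q * Q') := by
  ext s t
  simp only [kronPi_apply, mul_apply, Pi.mul_apply, ← Finset.prod_mul_distrib,
    Finset.prod_univ_sum, Fintype.piFinset_univ]

lemma trace_kronPi (Q : ι → Matrix κ κ R) : trace (kronPi Q) = ∏ j, trace (Q j) := by
  simp only [trace, diag_apply, kronPi_apply, Finset.prod_univ_sum, Fintype.piFinset_univ]

end Kronecker

section SingleQubit

-- `(x, z)` labels the Pauli matrix proportional to `σx ^ x * σz ^ z`.
def pauli (a : ZMod 2 × ZMod 2) : Matrix (Fin 2) (Fin 2) ℂ :=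
  if a.1 = 0 then (if a.2 = 0 then 1 else pauliSz) else (if a.2 = 0 then pauliSx else pauliSy)

-- `σ_a σ_b = δ_ab + i ε_abc σ_c`, with `σx = (1, 0)`, `σy = (1, 1)`, `σz = (0, 1)`.
def pauliPhase (a b : ZMod 2 × ZMod 2) : ℂ :=
  if a = 0 ∨ b = 0 ∨ a = b then 1
  else if (a, b) = ((1, 0), (1, 1)) ∨ (a, b) = ((1, 1), (0, 1)) ∨ (a, b) = ((0, 1), (1, 0))
  then Complex.I else -Complex.I

def symplecticPairing (a b : ZMod 2 × ZMod 2) : ZMod 2 := a.1 * b.2 + a.2 * b.1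

lemma zmod_two_prod_cases (a : ZMod 2 × ZMod 2) :
    a = (0, 0) ∨ a = (1, 0) ∨ a = (0, 1) ∨ a = (1, 1) := by
  revert a; decide

@[simp] lemma pauli_zero : pauli 0 = 1 := by simp [pauli]

lemma pauli_mul (a b : ZMod 2 × ZMod 2) : pauli a * pauli b = pauliPhase a b • pauli (a + b) := by
  rcases zmod_two_prod_cases a with rfl | rfl | rfl | rfl <;>
    rcases zmod_two_prod_cases b with rfl | rfl | rfl | rfl <;>
    · ext i j
      fin_cases i <;> fin_cases j <;>
        simp +decide [pauli, pauliPhase, pauliSx, pauliSy, pauliSz, mul_apply, one_apply,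
          Fin.sum_univ_two]

lemma pauliPhase_ne_zero (a b : ZMod 2 × ZMod 2) : pauliPhase a b ≠ 0 := by
  unfold pauliPhase; split_ifs <;> simp

lemma prod_pauliPhase_ne_zero {ι : Type*} [Fintype ι] (v w : ι → ZMod 2 × ZMod 2) :
    ∏ j, pauliPhase (v j) (w j) ≠ 0 :=
  Finset.prod_ne_zero_iff.2 fun _ _ => pauliPhase_ne_zero _ _

lemma pauliPhase_comm (a b : ZMod 2 × ZMod 2) :
    pauliPhase a b = (-1) ^ (symplecticPairing a b).val * pauliPhase b a := by
  rcases zmod_two_prod_cases a with rfl | rfl | rfl | rfl <;>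
    rcases zmod_two_prod_cases b with rfl | rfl | rfl | rfl <;>
    simp +decide [pauliPhase, symplecticPairing]

lemma pauli_mul_self (a : ZMod 2 × ZMod 2) : pauli a * pauli a = 1 := by
  rw [pauli_mul, show a + a = 0 by revert a; decide]
  simp [pauliPhase]

lemma trace_pauli {a : ZMod 2 × ZMod 2} (ha : a ≠ 0) : trace (pauli a) = 0 := by
  rcases zmod_two_prod_cases a with rfl | rfl | rfl | rfl
  · exact absurd rfl ha
  all_goals simp +decide [pauli, pauliSx, pauliSy, pauliSz, trace, Fin.sum_univ_two]

lemma exists_pauli_eq_iff {P : Matrix (Fin 2) (Fin 2) ℂ} :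
    (∃ a, pauli a = P) ↔ P = 1 ∨ P = pauliSx ∨ P = pauliSy ∨ P = pauliSz := by
  constructor
  · rintro ⟨a, rfl⟩
    rcases zmod_two_prod_cases a with rfl | rfl | rfl | rfl <;> simp +decide [pauli]
  · rintro (rfl | rfl | rfl | rfl)
    exacts [⟨(0, 0), by simp +decide [pauli]⟩, ⟨(1, 0), by simp +decide [pauli]⟩,
      ⟨(1, 1), by simp +decide [pauli]⟩, ⟨(0, 1), by simp +decide [pauli]⟩]

end SingleQubit

section SymplecticForm

variable (ι : Type*) [Fintype ι]

def symplecticForm : LinearMap.BilinForm (ZMod 2) (ι → ZMod 2 × ZMod 2) :=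
  LinearMap.mk₂ (ZMod 2) (fun v w => ∑ j, symplecticPairing (v j) (w j))
    (fun _ _ _ => by simp only [symplecticPairing, ← Finset.sum_add_distrib]; congr! 1; simp; ring)
    (fun _ _ _ => by
      simp only [symplecticPairing, smul_eq_mul, Finset.mul_sum]; congr! 1; simp; ring)
    (fun _ _ _ => by simp only [symplecticPairing, ← Finset.sum_add_distrib]; congr! 1; simp; ring)
    (fun _ _ _ => by
      simp only [symplecticPairing, smul_eq_mul, Finset.mul_sum]; congr! 1; simp; ring)

variable {ι}

lemma symplecticForm_apply (v w : ι → ZMod 2 × ZMod 2) :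
    symplecticForm ι v w = ∑ j, symplecticPairing (v j) (w j) := rfl

lemma symplecticForm_comm (v w : ι → ZMod 2 × ZMod 2) :
    symplecticForm ι v w = symplecticForm ι w v := by
  simp only [symplecticForm_apply, symplecticPairing, mul_comm, add_comm]

lemma symplecticForm_single [DecidableEq ι] (v : ι → ZMod 2 × ZMod 2) (j : ι)
    (a : ZMod 2 × ZMod 2) : symplecticForm ι v (Pi.single j a) = symplecticPairing (v j) a := by
  rw [symplecticForm_apply, Finset.sum_eq_single j (fun k _ hk => by
    simp [symplecticPairing, Pi.single_eq_of_ne hk]) (by simp), Pi.single_eq_same]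

lemma symplecticForm_nondegenerate [DecidableEq ι] : (symplecticForm ι).Nondegenerate := by
  refine (LinearMap.IsRefl.nondegenerate_iff_separatingLeft fun v w h => ?_).2 fun v hv => ?_
  · rwa [symplecticForm_comm]
  ext j
  · simpa [symplecticForm_single, symplecticPairing] using hv (Pi.single j (0, 1))
  · simpa [symplecticForm_single, symplecticPairing] using hv (Pi.single j (1, 0))

lemma finrank_pi_zmod_two_prod : finrank (ZMod 2) (ι → ZMod 2 × ZMod 2) = 2 * Fintype.card ι := by
  simp [Module.finrank_pi_fintype, mul_comm]

end SymplecticForm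

section PauliOperators

variable {N : ℕ}

def pauliOp (v : Fin N → ZMod 2 × ZMod 2) : QMat N := kronPi fun j => pauli (v j)

@[simp] lemma pauliOp_zero : pauliOp (0 : Fin N → ZMod 2 × ZMod 2) = 1 := by
  rw [pauliOp]
  simp only [Pi.zero_apply, pauli_zero]
  exact kronPi_one

lemma pauliOp_mul (v w : Fin N → ZMod 2 × ZMod 2) :
    pauliOp v * pauliOp w = (∏ j, pauliPhase (v j) (w j)) • pauliOp (v + w) := by
  rw [pauliOp, pauliOp, kronPi_mul, pauliOp, ← kronPi_smul]
  exact congrArg kronPi (funext fun j => pauli_mul _ _)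

lemma pauliOp_mul_self (v : Fin N → ZMod 2 × ZMod 2) : pauliOp v * pauliOp v = 1 := by
  rw [pauliOp, kronPi_mul, ← kronPi_one]
  exact congrArg kronPi (funext fun j => pauli_mul_self _)

lemma pauliOp_ne_zero (v : Fin N → ZMod 2 × ZMod 2) : pauliOp v ≠ 0 :=
  left_ne_zero_of_mul_eq_one (pauliOp_mul_self v)

lemma pauliOp_mul_comm (v w : Fin N → ZMod 2 × ZMod 2) :
    pauliOp v * pauliOp w = (-1 : ℂ) ^ (symplecticForm _ v w).val • (pauliOp w * pauliOp v) := by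
  rw [pauliOp_mul, pauliOp_mul, smul_smul, add_comm w v, symplecticForm_apply,
    neg_one_pow_val_sum, ← Finset.prod_mul_distrib]
  simp_rw [← pauliPhase_comm]

lemma commute_pauliOp_iff {v w : Fin N → ZMod 2 × ZMod 2} :
    Commute (pauliOp v) (pauliOp w) ↔ symplecticForm _ v w = 0 := by
  rw [Commute, SemiconjBy, pauliOp_mul_comm]
  rcases (show ∀ a : ZMod 2, a = 0 ∨ a = 1 by decide) (symplecticForm _ v w) with h | h
  · simp [h]
  · have hne : pauliOp w * pauliOp v ≠ 0 := left_ne_zero_of_mul_eq_one (b := pauliOp v * pauliOp w)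
      (by rw [mul_assoc, ← mul_assoc (pauliOp v), pauliOp_mul_self, one_mul, pauliOp_mul_self])
    rw [h, show (1 : ZMod 2).val = 1 from rfl, pow_one, neg_one_smul, neg_eq_iff_add_eq_zero,
      ← two_smul ℂ]
    simp [hne]

lemma eq_zero_of_pauliOp_eq_smul_one {v : Fin N → ZMod 2 × ZMod 2} {c : ℂ}
    (h : pauliOp v = c • 1) : v = 0 := by
  by_contra hv
  obtain ⟨j, hj⟩ := Function.ne_iff.1 hv
  have htr : trace (pauliOp v) = 0 := by
    rw [pauliOp, trace_kronPi]
    exact Finset.prod_eq_zero (Finset.mem_univ j) (trace_pauli hj)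
  have hc : c = 0 := by simpa [h] using htr
  exact pauliOp_ne_zero v (by rw [h, hc, zero_smul])

lemma eq_of_pauliOp_eq_smul_pauliOp {v w : Fin N → ZMod 2 × ZMod 2} {c : ℂ}
    (h : pauliOp v = c • pauliOp w) : v = w := by
  have hprod : (∏ j, pauliPhase (v j) (w j)) • pauliOp (v + w) = c • 1 := by
    rw [← pauliOp_mul, h, smul_mul_assoc, pauliOp_mul_self]
  rw [← sub_eq_zero]
  refine eq_zero_of_pauliOp_eq_smul_one (c := (∏ j, pauliPhase (v j) (w j))⁻¹ * c) ?_
  rw [← ZModModule.sub_eq_add] at hprod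
  rw [mul_smul, ← hprod, inv_smul_smul₀ (prod_pauliPhase_ne_zero v w)]

end PauliOperators

section PauliVec

variable {N : ℕ} {M M' : QMat N}

lemma ne_zero_of_eq_one_or_eq_neg_one {ε : ℂ} (h : ε = 1 ∨ ε = -1) : ε ≠ 0 := by
  rcases h with rfl | rfl <;> norm_num

lemma isPauli_iff : IsPauli M ↔ ∃ v, ∃ ε : ℂ, (ε = 1 ∨ ε = -1) ∧ M = ε • pauliOp v := by
  constructor
  · rintro ⟨ε, P, hε, hP, hM⟩
    choose v hv using fun j => exists_pauli_eq_iff.2 (hP j)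
    refine ⟨v, ε, hε, ?_⟩
    ext s t
    simp [hM, pauliOp, kronPi_apply, hv]
  · rintro ⟨v, ε, hε, rfl⟩
    exact ⟨ε, fun j => pauli (v j), hε, fun j => exists_pauli_eq_iff.1 ⟨_, rfl⟩, fun s t => rfl⟩

lemma isPauli_pauliOp (v : Fin N → ZMod 2 × ZMod 2) : IsPauli (pauliOp v) :=
  isPauli_iff.2 ⟨v, 1, Or.inl rfl, (one_smul _ _).symm⟩

def pauliVec (M : QMat N) : Fin N → ZMod 2 × ZMod 2 :=
  Classical.epsilon fun v => ∃ ε : ℂ, (ε = 1 ∨ ε = -1) ∧ M = ε • pauliOp v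

lemma _root_.IsPauli.exists_eq_smul_pauliOp (h : IsPauli M) :
    ∃ ε : ℂ, (ε = 1 ∨ ε = -1) ∧ M = ε • pauliOp (pauliVec M) :=
  Classical.epsilon_spec (isPauli_iff.1 h)

lemma pauliVec_pauliOp (v : Fin N → ZMod 2 × ZMod 2) : pauliVec (pauliOp v) = v := by
  obtain ⟨ε, -, h⟩ := (isPauli_pauliOp v).exists_eq_smul_pauliOp
  exact (eq_of_pauliOp_eq_smul_pauliOp h).symm

lemma _root_.IsPauli.mul_self (h : IsPauli M) : M * M = 1 := by
  obtain ⟨ε, hε, hM⟩ := h.exists_eq_smul_pauliOp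
  rw [hM, smul_mul_smul_comm, pauliOp_mul_self]
  rcases hε with rfl | rfl <;> simp

lemma _root_.IsPauli.commute_iff (hM : IsPauli M) (hM' : IsPauli M') :
    Commute M M' ↔ symplecticForm _ (pauliVec M) (pauliVec M') = 0 := by
  obtain ⟨ε, hε, hεM⟩ := hM.exists_eq_smul_pauliOp
  obtain ⟨ε', hε', hεM'⟩ := hM'.exists_eq_smul_pauliOp
  rw [hεM, hεM', Commute.smul_left_iff₀ (ne_zero_of_eq_one_or_eq_neg_one hε),
    Commute.smul_right_iff₀ (ne_zero_of_eq_one_or_eq_neg_one hε'),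
    commute_pauliOp_iff, ← hεM, ← hεM']

lemma exists_list_prod_eq_smul_pauliOp (L : List (QMat N)) (hL : ∀ M ∈ L, IsPauli M) :
    ∃ c : ℂ, c ≠ 0 ∧ L.prod = c • pauliOp (L.map pauliVec).sum := by
  induction L with
  | nil => exact ⟨1, one_ne_zero, by simp⟩
  | cons M L ih =>
    obtain ⟨c, hc, hL'⟩ := ih fun M' hM' => hL M' (List.mem_cons_of_mem _ hM')
    obtain ⟨ε, hε, hM⟩ := (hL M List.mem_cons_self).exists_eq_smul_pauliOp
    refine ⟨ε * c * ∏ j, pauliPhase (pauliVec M j) ((L.map pauliVec).sum j), ?_, ?_⟩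
    · exact mul_ne_zero (mul_ne_zero (ne_zero_of_eq_one_or_eq_neg_one hε) hc)
        (prod_pauliPhase_ne_zero _ _)
    · rw [List.map_cons, List.sum_cons, List.prod_cons, hL']
      nth_rw 1 [hM]
      rw [smul_mul_smul_comm, pauliOp_mul, smul_smul]

end PauliVec

section IndependentSets

variable {N : ℕ} {S : Set (QMat N)}

lemma exists_list_prod_eq_smul_one_iff {L : List (QMat N)} (hL : ∀ M ∈ L, IsPauli M) :
    (∃ c : ℂ, L.prod = c • 1) ↔ (L.map pauliVec).sum = 0 := by
  obtain ⟨c, hc, hprod⟩ := exists_list_prod_eq_smul_pauliOp L hL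
  refine ⟨fun ⟨d, hd⟩ => eq_zero_of_pauliOp_eq_smul_one (c := c⁻¹ * d) ?_,
    fun h => ⟨c, by rw [hprod, h, pauliOp_zero]⟩⟩
  rw [mul_smul, ← hd, hprod, inv_smul_smul₀ hc]

lemma isIndependentSet_iff : IsIndependentSet S ↔ (∀ M ∈ S, IsPauli M) ∧
    (∀ M ∈ S, ∀ M' ∈ S, M * M' = M' * M) ∧ LinearIndepOn (ZMod 2) pauliVec S := by
  classical
  constructor
  · rintro ⟨⟨hP, hC, -⟩, hind⟩
    refine ⟨hP, hC, linearIndepOn_zmod_two_iff.2 fun t hts hne hsum => ?_⟩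
    have htS : ∀ M ∈ t.toList, M ∈ S := fun M hM => hts (Finset.mem_toList.1 hM)
    obtain ⟨c, hc⟩ := (exists_list_prod_eq_smul_one_iff fun M hM => hP M (htS M hM)).2
      (by rwa [← List.sum_toFinset _ t.nodup_toList, Finset.toList_toFinset])
    exact hind t.toList (by simpa using hne.ne_empty) t.nodup_toList htS c hc
  · rintro ⟨hP, hC, hli⟩
    have hind : ∀ L : List (QMat N), L ≠ [] → L.Nodup → (∀ M ∈ L, M ∈ S) →
        ∀ c : ℂ, L.prod ≠ c • 1 := by
      intro L hne hnd hLS c hc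
      refine linearIndepOn_zmod_two_iff.1 hli L.toFinset
        (fun M hM => hLS M (List.mem_toFinset.1 hM)) (List.toFinset_nonempty_iff _ |>.2 hne) ?_
      rw [List.sum_toFinset _ hnd]
      exact (exists_list_prod_eq_smul_one_iff fun M hM => hP M (hLS M hM)).1 ⟨c, hc⟩
    refine ⟨⟨hP, hC, fun hmem => ?_⟩, hind⟩
    obtain ⟨L, hnd, hLS, hprod⟩ :=
      Submonoid.exists_nodup_list_of_mem_closure (fun M hM => (hP M hM).mul_self) hC hmem
    rcases eq_or_ne L [] with rfl | hne
    · have := congrFun (congrFun hprod 0) 0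
      norm_num at this
    · exact hind L hne hnd hLS (-1) (by rw [hprod, neg_one_smul])

lemma _root_.IsIndependentSet.linearIndepOn (hS : IsIndependentSet S) :
    LinearIndepOn (ZMod 2) pauliVec S :=
  (isIndependentSet_iff.1 hS).2.2

lemma _root_.IsIndependentSet.finite (hS : IsIndependentSet S) : S.Finite :=
  (Set.toFinite _).of_finite_image hS.linearIndepOn.injOn

lemma _root_.IsIndependentSet.finrank_span_eq_ncard (hS : IsIndependentSet S) :
    finrank (ZMod 2) (span (ZMod 2) (pauliVec '' S)) = S.ncard :=
  finrank_span_image_eq_ncard hS.linearIndepOn hS.finite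

lemma _root_.IsIndependentSet.span_le_orthogonal (hS : IsIndependentSet S) :
    span (ZMod 2) (pauliVec '' S) ≤
      (symplecticForm _).orthogonal (span (ZMod 2) (pauliVec '' S)) := by
  obtain ⟨hP, hC, -⟩ := isIndependentSet_iff.1 hS
  refine LinearMap.BilinForm.span_le_orthogonal_span ?_
  rintro _ ⟨M, hM, rfl⟩ _ ⟨M', hM', rfl⟩
  exact ((hP M hM).commute_iff (hP M' hM')).1 (hC M hM M' hM')

lemma _root_.IsIndependentSet.ncard_le (hS : IsIndependentSet S) : S.ncard ≤ N := by
  have := symplecticForm_nondegenerate.two_mul_finrank_le_of_le_orthogonal hS.span_le_orthogonal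
  rw [hS.finrank_span_eq_ncard, finrank_pi_zmod_two_prod, Fintype.card_fin] at this
  omega

lemma _root_.IsIndependentSet.exists_insert (hS : IsIndependentSet S) (hlt : S.ncard < N) :
    ∃ M ∉ S, IsIndependentSet (insert M S) := by
  obtain ⟨hP, hC, hli⟩ := isIndependentSet_iff.1 hS
  obtain ⟨u, hu, huS⟩ := symplecticForm_nondegenerate.exists_mem_orthogonal_notMem
    (W := span (ZMod 2) (pauliVec '' S))
    (by rw [hS.finrank_span_eq_ncard, finrank_pi_zmod_two_prod, Fintype.card_fin]; omega)
  have hMS : pauliOp u ∉ S := fun h => huS (subset_span ⟨_, h, pauliVec_pauliOp u⟩)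
  have hcomm : ∀ M ∈ S, Commute M (pauliOp u) := fun M hM =>
    ((hP M hM).commute_iff (isPauli_pauliOp u)).2 <| by
      rw [pauliVec_pauliOp]
      exact hu _ (subset_span ⟨M, hM, rfl⟩)
  refine ⟨pauliOp u, hMS, isIndependentSet_iff.2 ⟨?_, ?_, ?_⟩⟩
  · exact Set.forall_mem_insert.2 ⟨isPauli_pauliOp u, hP⟩
  · rintro M (rfl | hM) M' (rfl | hM')
    exacts [rfl, (hcomm M' hM').symm, hcomm M hM, hC M hM M' hM']
  · exact (linearIndepOn_insert hMS).2 ⟨hli, by rwa [pauliVec_pauliOp]⟩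

end IndependentSets

end Stabilizer

theorem statement2_general (N : ℕ) (S : Set (QMat N))
    (hS : IsIndependentSet S) :
    ∃ T : Set (QMat N), S ⊆ T ∧ IsCompleteSet T := by
  obtain ⟨k, hk⟩ : ∃ k, N - S.ncard = k := ⟨_, rfl⟩
  induction k generalizing S with
  | zero => exact ⟨S, subset_rfl, hS, le_antisymm hS.ncard_le (by omega)⟩
  | succ k ih =>
    obtain ⟨M, hMS, hins⟩ := hS.exists_insert (by omega)
    have hcard := Set.ncard_insert_of_notMem hMS hS.finite
    obtain ⟨T, hST, hT⟩ := ih (insert M S) hins (by omega)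
    exact ⟨T, (Set.subset_insert M S).trans hST, hT⟩

/-- every independent set of stabilizers extends to a complete one. -/
theorem statement2 (N : ℕ) (hN : 0 < N) (S : Set (QMat N))
    (hS : IsIndependentSet S) :
    ∃ T : Set (QMat N), S ⊆ T ∧ IsCompleteSet T :=
  statement2_general N S hS
end
end

section
/- Let ι be a finite type and let U, V be sets of functions ι → ZMod 2 such that u·v = 0 for every u ∈ U and v ∈ V. Let L₀ = {ψ : Z_v ψ = ψ for all v ∈ V, and X_u ψ = ψ for all u ∈ U}. Then there exists an orthonormal basis (e_β) of L₀ such that: (1) for every w : ι → ZMod 2 with w·u = 0 for all u ∈ U, the operator Z_w maps L₀ to itself and every e_β is an eigenvector of Z_w; and (2) for every c : ι → ZMod 2 with c·v = 0 for all v ∈ V, the operator X_c maps L₀ to itself and every matrix element ⟨e_β, X_c e_γ⟩ equals 0 or 1. -/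
noncomputable section

/-- The `ZMod 2`-valued dot product `u·v = ∑ j, u j * v j`. -/
def dotp {ι : Type} [Fintype ι] (u v : ι → ZMod 2) : ZMod 2 := ∑ j, u j * v j

/-- The X-type Pauli operator `X_u`: the permutation matrix with
`(X_u)_{s,t} = 1` iff `s = t + u`. -/
def Xop {ι : Type} [Fintype ι] (u : ι → ZMod 2) :
    Matrix (ι → ZMod 2) (ι → ZMod 2) ℂ :=
  Matrix.of fun s t => if s = t + u then 1 else 0

/-- The Z-type Pauli operator `Z_v`: the diagonal matrix with
`(Z_v)_{s,s} = (-1)^(v·s)`. -/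
def Zop {ι : Type} [Fintype ι] (v : ι → ZMod 2) :
    Matrix (ι → ZMod 2) (ι → ZMod 2) ℂ :=
  Matrix.of fun s t => if s = t then (-1 : ℂ) ^ (dotp v s).val else 0

/-- The standard inner product on the `ι`-qubit Hilbert space `(ι → ZMod 2) → ℂ`. -/
def qInner {ι : Type} [Fintype ι] [DecidableEq ι] (ψ φ : (ι → ZMod 2) → ℂ) : ℂ :=
  ∑ s, (starRingEnd ℂ) (ψ s) * φ s

/-- The subspace of vectors fixed by every operator in a given set of matrices. -/
def fixedSpace {ι : Type} [Fintype ι] [DecidableEq ι]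
    (Ms : Set (Matrix (ι → ZMod 2) (ι → ZMod 2) ℂ)) :
    Submodule ℂ ((ι → ZMod 2) → ℂ) :=
  ⨅ M ∈ Ms, LinearMap.ker (Matrix.mulVecLin M - LinearMap.id)

/-!
A vector fixed by every `X_u`, `u ∈ U`, is constant on the cosets of `W = span U`, and one
fixed by every `Z_v`, `v ∈ V`, vanishes at every `s` with `v·s ≠ 0`. Hence `L₀` has the
orthonormal basis of normalised indicator vectors of those cosets of `W` on which every `v ∈ V`
vanishes. If `w ⊥ U` then `w·s` is constant on each coset of `W`, so `Z_w` multiplies each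
indicator by a sign; `X_c` translates cosets, so it maps indicators to indicators and its
matrix elements are Kronecker deltas.
-/

open Finset Submodule Matrix

lemma zmod_two_eq_zero_or_eq_one (a : ZMod 2) : a = 0 ∨ a = 1 := by
  decide +revert

lemma apply_add_of_mem_span {M α : Type*} [AddCommGroup M] [Module (ZMod 2) M]
    {U : Set M} {ψ : M → α} (hU : ∀ u ∈ U, ∀ s, ψ (s + u) = ψ s) {x : M}
    (hx : x ∈ span (ZMod 2) U) (s : M) : ψ (s + x) = ψ s := by
  induction hx using Submodule.span_induction generalizing s with
  | mem u hu => exact hU u hu s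
  | zero => rw [add_zero]
  | add x y _ _ hx hy => rw [← add_assoc, hy, hx]
  | smul a x _ hx => obtain rfl | rfl := zmod_two_eq_zero_or_eq_one a <;> simp [hx]

lemma apply_out_mkQ {R M α : Type*} [Ring R] [AddCommGroup M] [Module R M]
    {W : Submodule R M} {ψ : M → α} (hψ : ∀ x ∈ W, ∀ s, ψ (s + x) = ψ s) (s : M) :
    ψ (W.mkQ s).out = ψ s := by
  simpa using hψ _ ((Submodule.Quotient.eq W).1 (Submodule.Quotient.mk_out (W.mkQ s))) s

section Pauli

variable {ι : Type} [Fintype ι]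

lemma dotp_add_right (w s t : ι → ZMod 2) : dotp w (s + t) = dotp w s + dotp w t :=
  dotProduct_add w s t

lemma dotp_comm (u v : ι → ZMod 2) : dotp u v = dotp v u :=
  dotProduct_comm u v

lemma dotp_eq_zero_of_mem_span {U : Set (ι → ZMod 2)} {w : ι → ZMod 2}
    (hw : ∀ u ∈ U, dotp w u = 0) {x : ι → ZMod 2} (hx : x ∈ span (ZMod 2) U) :
    dotp w x = 0 :=
  span_le (p := LinearMap.ker (dotProductBilin (ZMod 2) (ZMod 2) w)).2 hw hx

variable [DecidableEq ι]

lemma Zop_mulVec_apply (v : ι → ZMod 2) (ψ : (ι → ZMod 2) → ℂ) (s : ι → ZMod 2) :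
    (Zop v *ᵥ ψ) s = (-1) ^ (dotp v s).val * ψ s := by
  simp [Zop, mulVec, dotProduct, ite_mul]

lemma Xop_mulVec_apply (u : ι → ZMod 2) (ψ : (ι → ZMod 2) → ℂ) (s : ι → ZMod 2) :
    (Xop u *ᵥ ψ) s = ψ (s + u) := by
  have hshift (t : ι → ZMod 2) : s = t + u ↔ t = s + u := by
    rw [eq_comm, ← eq_sub_iff_add_eq, ZModModule.sub_eq_add]
  simp [Xop, mulVec, dotProduct, hshift]

lemma Zop_mulVec_eq_self_iff (v : ι → ZMod 2) (ψ : (ι → ZMod 2) → ℂ) :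
    Zop v *ᵥ ψ = ψ ↔ ∀ s, dotp v s ≠ 0 → ψ s = 0 := by
  simp only [funext_iff, Zop_mulVec_apply]
  refine forall_congr' fun s => ?_
  obtain h | h := zmod_two_eq_zero_or_eq_one (dotp v s) <;>
    simp [h, ZMod.val_one, _root_.neg_eq_self]

lemma Xop_mulVec_eq_self_iff (u : ι → ZMod 2) (ψ : (ι → ZMod 2) → ℂ) :
    Xop u *ᵥ ψ = ψ ↔ ∀ s, ψ (s + u) = ψ s := by
  simp only [funext_iff, Xop_mulVec_apply]

lemma mem_fixedSpace_iff {Ms : Set (Matrix (ι → ZMod 2) (ι → ZMod 2) ℂ)}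
    {ψ : (ι → ZMod 2) → ℂ} : ψ ∈ fixedSpace Ms ↔ ∀ M ∈ Ms, M *ᵥ ψ = ψ := by
  simp [fixedSpace, sub_eq_zero]

end Pauli

section CodeSpace

variable {ι : Type} [Fintype ι] [DecidableEq ι]

def codeSpace (U V : Set (ι → ZMod 2)) : Submodule ℂ ((ι → ZMod 2) → ℂ) :=
  fixedSpace ({M | ∃ v ∈ V, M = Zop v} ∪ {M | ∃ u ∈ U, M = Xop u})

variable {U V : Set (ι → ZMod 2)} {ψ : (ι → ZMod 2) → ℂ}

lemma mem_codeSpace_iff : ψ ∈ codeSpace U V ↔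
    (∀ v ∈ V, ∀ s, dotp v s ≠ 0 → ψ s = 0) ∧ ∀ u ∈ U, ∀ s, ψ (s + u) = ψ s := by
  simp only [codeSpace, mem_fixedSpace_iff, Set.mem_union, Set.mem_ofPred_eq, or_imp,
    forall_and, forall_exists_index, and_imp]
  rw [forall_comm, forall_comm (α := Matrix _ _ ℂ)]
  simp [Zop_mulVec_eq_self_iff, Xop_mulVec_eq_self_iff]

lemma Zop_mulVec_mem_codeSpace {w : ι → ZMod 2} (hw : ∀ u ∈ U, dotp w u = 0)
    (hψ : ψ ∈ codeSpace U V) : Zop w *ᵥ ψ ∈ codeSpace U V := by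
  obtain ⟨hZ, hX⟩ := mem_codeSpace_iff.1 hψ
  refine mem_codeSpace_iff.2 ⟨fun v hv s hs => ?_, fun u hu s => ?_⟩
  · rw [Zop_mulVec_apply, hZ v hv s hs, mul_zero]
  · rw [Zop_mulVec_apply, Zop_mulVec_apply, dotp_add_right, hw u hu, add_zero, hX u hu]

lemma Xop_mulVec_mem_codeSpace {c : ι → ZMod 2} (hc : ∀ v ∈ V, dotp c v = 0)
    (hψ : ψ ∈ codeSpace U V) : Xop c *ᵥ ψ ∈ codeSpace U V := by
  obtain ⟨hZ, hX⟩ := mem_codeSpace_iff.1 hψ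
  refine mem_codeSpace_iff.2 ⟨fun v hv s hs => ?_, fun u hu s => ?_⟩
  · rw [Xop_mulVec_apply]
    exact hZ v hv _ (by rwa [dotp_add_right, dotp_comm v c, hc v hv, add_zero])
  · rw [Xop_mulVec_apply, Xop_mulVec_apply, add_right_comm, hX u hu]

end CodeSpace

section CosetVec

open scoped Classical

variable {ι : Type} [Fintype ι] [DecidableEq ι] (W : Submodule (ZMod 2) (ι → ZMod 2))

lemma card_filter_mkQ_eq (t : ι → ZMod 2) : #{s | W.mkQ s = W.mkQ t} = Nat.card W := by
  rw [Nat.card_eq_fintype_card, Fintype.card_subtype]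
  refine card_nbij' (· - t) (· + t) ?_ ?_ ?_ ?_ <;>
    simp [Set.MapsTo, Set.LeftInvOn, Set.RightInvOn, Submodule.Quotient.eq]

def cosetVec (q : (ι → ZMod 2) ⧸ W) : (ι → ZMod 2) → ℂ :=
  fun s => if W.mkQ s = q then ((√(Nat.card W : ℝ))⁻¹ : ℝ) else 0

lemma qInner_cosetVec (q q' : (ι → ZMod 2) ⧸ W) :
    qInner (cosetVec W q) (cosetVec W q') = if q = q' then 1 else 0 := by
  obtain ⟨t, rfl⟩ := W.mkQ_surjective q
  have hterm (s : ι → ZMod 2) : starRingEnd ℂ (cosetVec W (W.mkQ t) s) * cosetVec W q' s =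
      if W.mkQ s = W.mkQ t then (if W.mkQ t = q' then (Nat.card W : ℂ)⁻¹ else 0)
      else 0 := by
    unfold cosetVec
    split_ifs <;> simp_all [← mul_inv, ← Complex.ofReal_mul]
  rw [qInner, sum_congr rfl fun s _ => hterm s, ← sum_filter, sum_const, card_filter_mkQ_eq,
    nsmul_eq_mul]
  split_ifs <;> simp

lemma Xop_mulVec_cosetVec (c : ι → ZMod 2) (q : (ι → ZMod 2) ⧸ W) :
    Xop c *ᵥ cosetVec W q = cosetVec W (q - W.mkQ c) := by
  ext s
  simp only [Xop_mulVec_apply, cosetVec, map_add, eq_sub_iff_add_eq]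

lemma Zop_mulVec_cosetVec {w : ι → ZMod 2} (hw : ∀ x ∈ W, dotp w x = 0) (t : ι → ZMod 2) :
    Zop w *ᵥ cosetVec W (W.mkQ t) = (-1 : ℂ) ^ (dotp w t).val • cosetVec W (W.mkQ t) := by
  ext s
  rw [Zop_mulVec_apply, Pi.smul_apply, smul_eq_mul, cosetVec]
  split_ifs with hst
  · have hsub : s - t ∈ W := (Submodule.Quotient.eq W).1 hst
    rw [← sub_add_cancel s t, dotp_add_right, hw _ hsub, zero_add]
  · rw [mul_zero, mul_zero]

lemma eq_sum_cosetVec {ψ : (ι → ZMod 2) → ℂ} (hψ : ∀ x ∈ W, ∀ s, ψ (s + x) = ψ s) :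
    ψ = ∑ q, (√(Nat.card W : ℝ) * ψ q.out) • cosetVec W q := by
  ext s
  rw [Finset.sum_apply, sum_eq_single (W.mkQ s)
    (fun q _ hq => by rw [Pi.smul_apply, cosetVec, if_neg hq.symm, smul_zero]) (by simp)]
  have hcard : (√(Nat.card W : ℝ) : ℂ) ≠ 0 := by simp
  rw [Pi.smul_apply, cosetVec, if_pos rfl, apply_out_mkQ hψ, smul_eq_mul, mul_comm _ (ψ s),
    Complex.ofReal_inv, mul_inv_cancel_right₀ hcard]

end CosetVec

section Basis

variable {ι : Type} [Fintype ι] [DecidableEq ι] {U V : Set (ι → ZMod 2)}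

variable (U V) in
def orthCosets : Set ((ι → ZMod 2) ⧸ span (ZMod 2) U) :=
  {q | ∀ s, (span (ZMod 2) U).mkQ s = q → ∀ v ∈ V, dotp v s = 0}

lemma cosetVec_mem_codeSpace {q : (ι → ZMod 2) ⧸ span (ZMod 2) U} (hq : q ∈ orthCosets U V) :
    cosetVec (span (ZMod 2) U) q ∈ codeSpace U V := by
  refine mem_codeSpace_iff.2 ⟨fun v hv s hs => ?_, fun u hu s => ?_⟩
  · rw [cosetVec, if_neg fun hsq => hs (hq s hsq v hv)]
  · have hcoset : (span (ZMod 2) U).mkQ (s + u) = (span (ZMod 2) U).mkQ s := by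
      rw [map_add, mkQ_apply, mkQ_apply, (Submodule.Quotient.mk_eq_zero _).2 (subset_span hu),
        add_zero]
    unfold cosetVec
    rw [hcoset]

lemma mem_span_cosetVec {ψ : (ι → ZMod 2) → ℂ} (hψ : ψ ∈ codeSpace U V) :
    ψ ∈ span ℂ (Set.range fun q : orthCosets U V => cosetVec (span (ZMod 2) U) q) := by
  obtain ⟨hZ, hX⟩ := mem_codeSpace_iff.1 hψ
  have hW : ∀ x ∈ span (ZMod 2) U, ∀ s, ψ (s + x) = ψ s := fun x hx =>
    apply_add_of_mem_span hX hx
  rw [eq_sum_cosetVec _ hW]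
  refine sum_mem fun q _ => ?_
  by_cases hq : q ∈ orthCosets U V
  · exact smul_mem _ _ (subset_span ⟨⟨q, hq⟩, rfl⟩)
  · simp only [orthCosets, Set.mem_ofPred_eq, not_forall] at hq
    obtain ⟨s, rfl, v, hv, hvs⟩ := hq
    rw [apply_out_mkQ hW, hZ v hv s hvs, mul_zero, zero_smul]
    exact zero_mem _

end Basis

theorem statement6_general (ι : Type) [Fintype ι] [DecidableEq ι]
    (U V : Set (ι → ZMod 2)) :
    ∃ (β : Type) (_ : Fintype β) (e : β → ((ι → ZMod 2) → ℂ)),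
      (∀ b, e b ∈ fixedSpace ({M | ∃ v ∈ V, M = Zop v} ∪ {M | ∃ u ∈ U, M = Xop u})) ∧
      (∀ b, qInner (e b) (e b) = 1) ∧
      (∀ b b', b ≠ b' → qInner (e b) (e b') = 0) ∧
      (∀ ψ ∈ fixedSpace ({M | ∃ v ∈ V, M = Zop v} ∪ {M | ∃ u ∈ U, M = Xop u}),
        ψ ∈ Submodule.span ℂ (Set.range e)) ∧
      (∀ w : ι → ZMod 2, (∀ u ∈ U, dotp w u = 0) →
        (∀ ψ ∈ fixedSpace ({M | ∃ v ∈ V, M = Zop v} ∪ {M | ∃ u ∈ U, M = Xop u}),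
          (Zop w).mulVec ψ ∈
            fixedSpace ({M | ∃ v ∈ V, M = Zop v} ∪ {M | ∃ u ∈ U, M = Xop u})) ∧
        (∀ b, ∃ μ : ℂ, (Zop w).mulVec (e b) = μ • e b)) ∧
      (∀ c : ι → ZMod 2, (∀ v ∈ V, dotp c v = 0) →
        (∀ ψ ∈ fixedSpace ({M | ∃ v ∈ V, M = Zop v} ∪ {M | ∃ u ∈ U, M = Xop u}),
          (Xop c).mulVec ψ ∈
            fixedSpace ({M | ∃ v ∈ V, M = Zop v} ∪ {M | ∃ u ∈ U, M = Xop u})) ∧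
        (∀ b b', qInner (e b) ((Xop c).mulVec (e b')) = 0 ∨
                 qInner (e b) ((Xop c).mulVec (e b')) = 1)) := by
  classical
  refine ⟨orthCosets U V, Fintype.ofFinite _, fun q => cosetVec (span (ZMod 2) U) q,
    fun q => cosetVec_mem_codeSpace q.2, fun q => by simp [qInner_cosetVec], fun q q' hqq' => ?_,
    fun ψ hψ => mem_span_cosetVec hψ,
    fun w hw => ⟨fun ψ hψ => Zop_mulVec_mem_codeSpace hw hψ, fun q => ?_⟩,
    fun c hc => ⟨fun ψ hψ => Xop_mulVec_mem_codeSpace hc hψ, fun q q' => ?_⟩⟩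
  · rw [qInner_cosetVec, if_neg (Subtype.coe_injective.ne hqq')]
  · obtain ⟨t, ht⟩ := (span (ZMod 2) U).mkQ_surjective q.1
    exact ⟨_, ht ▸ Zop_mulVec_cosetVec _ (fun x hx => dotp_eq_zero_of_mem_span hw hx) t⟩
  · rw [Xop_mulVec_cosetVec, qInner_cosetVec]
    split_ifs <;> simp

/-- existence of an orthonormal basis of the joint fixed subspace
`L₀ = {ψ | Z_v ψ = ψ ∀ v ∈ V, X_u ψ = ψ ∀ u ∈ U}` in which every `Z_w` commuting
with all `X_u` (`u ∈ U`) is diagonal, and every `X_c` commuting with all `Z_v`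
(`v ∈ V`) has matrix elements `0` or `1`. -/
theorem statement6 (ι : Type) [Fintype ι] [DecidableEq ι]
    (U V : Set (ι → ZMod 2))
    (hUV : ∀ u ∈ U, ∀ v ∈ V, dotp u v = 0) :
    ∃ (β : Type) (_ : Fintype β) (e : β → ((ι → ZMod 2) → ℂ)),
      (∀ b, e b ∈ fixedSpace ({M | ∃ v ∈ V, M = Zop v} ∪ {M | ∃ u ∈ U, M = Xop u})) ∧
      (∀ b, qInner (e b) (e b) = 1) ∧
      (∀ b b', b ≠ b' → qInner (e b) (e b') = 0) ∧
      (∀ ψ ∈ fixedSpace ({M | ∃ v ∈ V, M = Zop v} ∪ {M | ∃ u ∈ U, M = Xop u}),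
        ψ ∈ Submodule.span ℂ (Set.range e)) ∧
      (∀ w : ι → ZMod 2, (∀ u ∈ U, dotp w u = 0) →
        (∀ ψ ∈ fixedSpace ({M | ∃ v ∈ V, M = Zop v} ∪ {M | ∃ u ∈ U, M = Xop u}),
          (Zop w).mulVec ψ ∈
            fixedSpace ({M | ∃ v ∈ V, M = Zop v} ∪ {M | ∃ u ∈ U, M = Xop u})) ∧
        (∀ b, ∃ μ : ℂ, (Zop w).mulVec (e b) = μ • e b)) ∧
      (∀ c : ι → ZMod 2, (∀ v ∈ V, dotp c v = 0) →
        (∀ ψ ∈ fixedSpace ({M | ∃ v ∈ V, M = Zop v} ∪ {M | ∃ u ∈ U, M = Xop u}),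
          (Xop c).mulVec ψ ∈
            fixedSpace ({M | ∃ v ∈ V, M = Zop v} ∪ {M | ∃ u ∈ U, M = Xop u})) ∧
        (∀ b b', qInner (e b) ((Xop c).mulVec (e b')) = 0 ∨
                 qInner (e b) ((Xop c).mulVec (e b')) = 1)) :=
  statement6_general ι U V
end
end

section
/- Let (ι, A, I, z, x) be a GI datum and a, b : ι → ZMod 2. Suppose the operator X_a Z_b commutes with X_{x i} for every i ∈ I and with Z_v for every v : ι → ZMod 2 satisfying v·(x i) = 0 for all i ∈ I. Then there exist ε ∈ {1, −1}, a finite subset S ⊆ I, and v₀ : ι → ZMod 2 with v₀·(x i) = 0 for all i ∈ I, such that X_a Z_b = ε · (∏_{i ∈ S} X_{x i}) · Z_{v₀}. -/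
noncomputable section

/-! Reading off single matrix entries, commutation of `X_a Z_b` with `X_u` forces
`(-1)^(b·u) = 1` and commutation with `Z_v` forces `(-1)^(v·a) = 1`. Hence `b` is orthogonal to
every `x i`, and `a` is orthogonal to the orthogonal complement of the `x i`, so lies in their
span (double annihilator in finite dimension); over `ZMod 2` this makes `a` a sum `∑_{i ∈ S} x i`,
whence `X_a Z_b = (∏_{i ∈ S} X_{x i}) Z_b` with `ε = 1` and `v₀ = b`. -/

open Matrix Submodule

lemma neg_one_pow_val_eq_one_iff {p : ZMod 2} : (-1 : ℂ) ^ p.val = 1 ↔ p = 0 := by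
  obtain rfl | rfl : p = 0 ∨ p = 1 := by revert p; decide
  · simp
  · norm_num [ZMod.val_one]

lemma dotp_eq_dotProduct {ι : Type} [Fintype ι] (u v : ι → ZMod 2) : dotp u v = u ⬝ᵥ v := rfl

lemma mem_span_range_of_forall_dotProduct_eq_zero {K ι I : Type*} [Field K] [Fintype ι]
    [DecidableEq ι] {x : I → ι → K} {a : ι → K}
    (h : ∀ v, (∀ i, v ⬝ᵥ x i = 0) → v ⬝ᵥ a = 0) : a ∈ span K (Set.range x) := by
  rw [← Subspace.forall_mem_dualAnnihilator_apply_eq_zero_iff]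
  intro φ hφ
  obtain ⟨v, rfl⟩ := (dotProductEquiv K ι).surjective φ
  exact h v fun i => (mem_dualAnnihilator _).mp hφ _ (subset_span (Set.mem_range_self i))

lemma exists_finset_sum_eq_of_mem_span_range {M I : Type*} [AddCommGroup M] [Module (ZMod 2) M]
    {x : I → M} {a : M} (h : a ∈ span (ZMod 2) (Set.range x)) :
    ∃ S : Finset I, ∑ i ∈ S, x i = a := by
  obtain ⟨c, rfl⟩ := Finsupp.mem_span_range_iff_exists_finsupp.mp h
  have eq_one_of_ne_zero : ∀ p : ZMod 2, p ≠ 0 → p = 1 := by decide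
  refine ⟨c.support, Finset.sum_congr rfl fun i hi => ?_⟩
  rw [eq_one_of_ne_zero _ (Finsupp.mem_support_iff.mp hi)]
  exact (one_smul _ _).symm

lemma add_self_eq_zero_of_zmod_two {ι : Type*} (u : ι → ZMod 2) : u + u = 0 :=
  funext fun j => CharTwo.add_self_eq_zero (u j)

section Pauli

variable {ι : Type} [Fintype ι]

lemma Xop_zero : Xop (0 : ι → ZMod 2) = 1 := by
  ext s t; simp [Xop, one_apply]

variable [DecidableEq ι]

lemma Xop_mul_apply (u : ι → ZMod 2) (M : Matrix (ι → ZMod 2) (ι → ZMod 2) ℂ) (s t) :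
    (Xop u * M) s t = M (s + u) t := by
  have hsum (r : ι → ZMod 2) : s = r + u ↔ r = s + u := by
    constructor <;> rintro rfl <;> rw [add_assoc, add_self_eq_zero_of_zmod_two, add_zero]
  simp only [mul_apply, Xop, of_apply, hsum, ite_mul, one_mul, zero_mul,
    Finset.sum_ite_eq', Finset.mem_univ, if_true]

lemma mul_Xop_apply (M : Matrix (ι → ZMod 2) (ι → ZMod 2) ℂ) (u : ι → ZMod 2) (s t) :
    (M * Xop u) s t = M s (t + u) := by
  simp [mul_apply, Xop, mul_ite, Finset.sum_ite_eq']

lemma Zop_mul_apply (v : ι → ZMod 2) (M : Matrix (ι → ZMod 2) (ι → ZMod 2) ℂ) (s t) :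
    (Zop v * M) s t = (-1 : ℂ) ^ (dotp v s).val * M s t := by
  simp [mul_apply, Zop, ite_mul, Finset.sum_ite_eq]

lemma mul_Zop_apply (M : Matrix (ι → ZMod 2) (ι → ZMod 2) ℂ) (v : ι → ZMod 2) (s t) :
    (M * Zop v) s t = M s t * (-1 : ℂ) ^ (dotp v t).val := by
  simp [mul_apply, Zop, mul_ite, Finset.sum_ite_eq']

lemma Xop_mul_Zop_apply (a b : ι → ZMod 2) (s t) :
    (Xop a * Zop b) s t = if s = t + a then (-1 : ℂ) ^ (dotp b t).val else 0 := by
  simp [mul_Zop_apply, Xop, ite_mul]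

lemma Xop_mul_Xop (u w : ι → ZMod 2) : Xop u * Xop w = Xop (u + w) := by
  ext s t
  rw [mul_Xop_apply]
  simp only [Xop, of_apply, add_assoc, add_comm w u]

lemma list_prod_map_Xop {α : Type*} (l : List α) (f : α → ι → ZMod 2) :
    (l.map fun i => Xop (f i)).prod = Xop (l.map f).sum := by
  induction l with
  | nil => simp [Xop_zero]
  | cons i l ih => simp [ih, Xop_mul_Xop]

lemma dotp_eq_zero_of_commute_Xop {a b u : ι → ZMod 2} (h : Commute (Xop a * Zop b) (Xop u)) :
    dotp b u = 0 := by
  have h_entry := congrFun₂ h.eq (u + a) 0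
  have hu : u + a + u = a := by rw [add_right_comm, add_self_eq_zero_of_zmod_two, zero_add]
  rw [mul_Xop_apply, Xop_mul_Zop_apply, Xop_mul_apply, Xop_mul_Zop_apply, hu] at h_entry
  simpa [add_comm a u, dotp_eq_dotProduct, neg_one_pow_val_eq_one_iff] using h_entry

lemma dotp_eq_zero_of_commute_Zop {a b v : ι → ZMod 2} (h : Commute (Xop a * Zop b) (Zop v)) :
    dotp v a = 0 := by
  have h_entry := congrFun₂ h.eq a 0
  rw [mul_Zop_apply, Zop_mul_apply, Xop_mul_Zop_apply] at h_entry
  simpa [dotp_eq_dotProduct, neg_one_pow_val_eq_one_iff] using h_entry.symm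

end Pauli

theorem statement8_general (ι I : Type) [Fintype ι] [DecidableEq ι]
    (x : I → ι → ZMod 2)
    (a b : ι → ZMod 2)
    (h1 : ∀ i, (Xop a * Zop b) * Xop (x i) = Xop (x i) * (Xop a * Zop b))
    (h2 : ∀ v : ι → ZMod 2, (∀ i, dotp v (x i) = 0) →
      (Xop a * Zop b) * Zop v = Zop v * (Xop a * Zop b)) :
    ∃ ε : ℂ, (ε = 1 ∨ ε = -1) ∧
      ∃ (S : Finset I) (v₀ : ι → ZMod 2),
        (∀ i, dotp v₀ (x i) = 0) ∧
        Xop a * Zop b = ε • ((S.toList.map fun i => Xop (x i)).prod * Zop v₀) := by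
  have hb : ∀ i, dotp b (x i) = 0 := fun i => dotp_eq_zero_of_commute_Xop (h1 i)
  have ha : a ∈ span (ZMod 2) (Set.range x) :=
    mem_span_range_of_forall_dotProduct_eq_zero fun v hv => dotp_eq_zero_of_commute_Zop (h2 v hv)
  obtain ⟨S, hS⟩ := exists_finset_sum_eq_of_mem_span_range ha
  refine ⟨1, Or.inl rfl, S, b, hb, ?_⟩
  rw [one_smul, list_prod_map_Xop, Finset.sum_map_toList, hS]

/-- in a GI datum `(ι, A, I, z, x)`, any operator `X_a Z_b` commuting with
all `X_{x i}` and with every `Z_v` for `v` orthogonal to all `x i` equals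
`± (∏_{i ∈ S} X_{x i}) · Z_{v₀}` for some finite `S ⊆ I` and some `v₀` orthogonal to
all `x i`. -/
theorem statement8 (ι A I : Type) [Fintype ι] [DecidableEq ι] [Fintype A] [Fintype I]
    (z : A → ι → ZMod 2) (x : I → ι → ZMod 2)
    (a b : ι → ZMod 2)
    (h1 : ∀ i, (Xop a * Zop b) * Xop (x i) = Xop (x i) * (Xop a * Zop b))
    (h2 : ∀ v : ι → ZMod 2, (∀ i, dotp v (x i) = 0) →
      (Xop a * Zop b) * Zop v = Zop v * (Xop a * Zop b)) :
    ∃ ε : ℂ, (ε = 1 ∨ ε = -1) ∧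
      ∃ (S : Finset I) (v₀ : ι → ZMod 2),
        (∀ i, dotp v₀ (x i) = 0) ∧
        Xop a * Zop b = ε • ((S.toList.map fun i => Xop (x i)).prod * Zop v₀) :=
  statement8_general ι I x a b h1 h2
end
end
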